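/- Let (X, c) be a finite metric space with |X| = n, let 1 ≤ k < n, and let R_n ⊇ R_{n−1} ⊇ ⋯ ⊇ R_k be an RGreedy execution (so R_n = X, |R_j| = j, and each step removes a facility minimizing the resulting cost). Then for every nonempty M ⊆ X with |M| = k, cost(R_k) ≤ 2·H_{n−k}·cost(M), where H_m = ∑_{i=1}^m 1/i is the m-th harmonic number. In particular the approximation ratio of the Reverse Greedy algorithm for the metric k-median problem is at most 2·H_{n−k} = O(log n). -/
import Mathlib


/-- `kmDist x F` is the distance from a point `x` to a nonempty finite set `F`,
i.e. `min_{f ∈ F} dist x f` (junk value `0` if `F = ∅`). -/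
noncomputable def kmDist {X : Type*} [MetricSpace X] (x : X) (F : Finset X) : ℝ :=
  if h : F.Nonempty then F.inf' h (fun f => dist x f) else 0

/-- `kmCost F = ∑_{x ∈ X} c(x, F)`, the total service cost of the facility set `F`. -/
noncomputable def kmCost {X : Type*} [MetricSpace X] [Fintype X] (F : Finset X) : ℝ :=
  ∑ x : X, kmDist x F

section kmAux

variable {X : Type*} [MetricSpace X]

lemma kmDist_nonneg (x : X) (F : Finset X) : 0 ≤ kmDist x F := by
  unfold kmDist
  split
  · exact Finset.le_inf' _ _ fun f _ => dist_nonneg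
  · exact le_rfl

lemma kmDist_le {F : Finset X} {f : X} (x : X) (hf : f ∈ F) : kmDist x F ≤ dist x f := by
  unfold kmDist
  rw [dif_pos ⟨f, hf⟩]
  exact Finset.inf'_le _ hf

lemma exists_kmDist (x : X) {F : Finset X} (h : F.Nonempty) :
    ∃ f ∈ F, kmDist x F = dist x f := by
  unfold kmDist
  rw [dif_pos h]
  exact Finset.exists_mem_eq_inf' h _

variable [Fintype X]

lemma kmCost_nonneg (F : Finset X) : 0 ≤ kmCost F :=
  Finset.sum_nonneg fun x _ => kmDist_nonneg x F

lemma kmCost_univ : kmCost (Finset.univ : Finset X) = 0 := by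
  unfold kmCost
  refine Finset.sum_eq_zero fun x _ => le_antisymm ?_ (kmDist_nonneg x _)
  simpa using kmDist_le x (Finset.mem_univ x)

lemma kmKey [DecidableEq X] (k : ℕ) (F M : Finset X)
    (hM : M.Nonempty) (hMk : M.card ≤ k) (hF : k < F.card) :
    ∃ r ∈ F, kmCost (F.erase r) ≤ kmCost F + 2 * kmCost M / ((F.card - k : ℕ) : ℝ) := by
  have hFne : F.Nonempty := Finset.card_pos.mp (by omega)
  choose nf hnfF hnfd using fun x : X => exists_kmDist x hFne
  choose nm hnmM hnmd using fun x : X => exists_kmDist x hM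
  set G : Finset X := M.image nf with hG
  set S : Finset X := F \ G with hS
  have hGcard : G.card ≤ k := le_trans Finset.card_image_le hMk
  have hScard : F.card - k ≤ S.card := by
    have h := Finset.le_card_sdiff G F
    rw [← hS] at h
    omega
  have hSne : S.Nonempty := Finset.card_pos.mp (by omega)
  have hper : ∀ r ∈ S, kmCost (F.erase r) - kmCost F ≤
      ∑ x : X, (if nf x = r then 2 * kmDist x M else 0) := by
    intro r hr
    have hrF : r ∈ F := (Finset.mem_sdiff.mp hr).1
    have hrG : r ∉ G := (Finset.mem_sdiff.mp hr).2
    have hmain : kmCost (F.erase r) ≤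
        ∑ x : X, (kmDist x F + if nf x = r then 2 * kmDist x M else 0) := by
      unfold kmCost
      refine Finset.sum_le_sum fun x _ => ?_
      by_cases hx : nf x = r
      · rw [if_pos hx]
        have hmM : nm x ∈ M := hnmM x
        have hw : nf (nm x) ∈ F.erase r := by
          refine Finset.mem_erase.mpr ⟨?_, hnfF _⟩
          intro he
          exact hrG (he ▸ Finset.mem_image_of_mem nf hmM)
        have h1 : dist (nm x) (nf (nm x)) ≤ dist (nm x) r := by
          have h2 := kmDist_le (nm x) hrF
          rw [hnfd (nm x)] at h2
          exact h2
        have h3 : dist (nm x) r ≤ dist (nm x) x + dist x r := dist_triangle _ _ _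
        have h4 : dist x r = kmDist x F := by rw [← hx, ← hnfd x]
        have h5 : kmDist x M = dist x (nm x) := hnmd x
        have h6 : dist (nm x) x = dist x (nm x) := dist_comm _ _
        have h7 : kmDist x (F.erase r) ≤ dist x (nf (nm x)) := kmDist_le x hw
        have h8 : dist x (nf (nm x)) ≤ dist x (nm x) + dist (nm x) (nf (nm x)) :=
          dist_triangle _ _ _
        linarith
      · rw [if_neg hx, add_zero]
        have hmem : nf x ∈ F.erase r := Finset.mem_erase.mpr ⟨hx, hnfF x⟩
        calc kmDist x (F.erase r) ≤ dist x (nf x) := kmDist_le x hmem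
          _ = kmDist x F := (hnfd x).symm
    have hsum : ∑ x : X, (kmDist x F + if nf x = r then 2 * kmDist x M else 0)
        = kmCost F + ∑ x : X, (if nf x = r then 2 * kmDist x M else 0) := by
      rw [Finset.sum_add_distrib]; rfl
    linarith [hmain, hsum.le, hsum.ge]
  have hsumS : ∑ r ∈ S, (kmCost (F.erase r) - kmCost F) ≤ 2 * kmCost M := by
    calc ∑ r ∈ S, (kmCost (F.erase r) - kmCost F)
        ≤ ∑ r ∈ S, ∑ x : X, (if nf x = r then 2 * kmDist x M else 0) :=
          Finset.sum_le_sum hper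
      _ = ∑ x : X, ∑ r ∈ S, (if nf x = r then 2 * kmDist x M else 0) := Finset.sum_comm
      _ ≤ ∑ x : X, 2 * kmDist x M := by
          refine Finset.sum_le_sum fun x _ => ?_
          rw [Finset.sum_ite_eq S (nf x) (fun _ => 2 * kmDist x M)]
          split
          · exact le_refl _
          · have := kmDist_nonneg x M; linarith
      _ = 2 * kmCost M := by rw [← Finset.mul_sum]; rfl
  have hSc : (0:ℝ) < (S.card : ℝ) := by
    exact_mod_cast Finset.card_pos.mpr hSne
  have havg : ∃ r ∈ S, kmCost (F.erase r) - kmCost F ≤ 2 * kmCost M / (S.card : ℝ) := by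
    apply Finset.exists_le_of_sum_le hSne
    rw [Finset.sum_const, nsmul_eq_mul]
    have heq : (S.card:ℝ) * (2 * kmCost M / (S.card:ℝ)) = 2 * kmCost M := by
      field_simp
    rw [heq]; exact hsumS
  obtain ⟨r, hrS, hr⟩ := havg
  refine ⟨r, (Finset.mem_sdiff.mp hrS).1, ?_⟩
  have hnum : (0:ℝ) ≤ 2 * kmCost M := by
    have := kmCost_nonneg M; linarith
  have hd0 : (0:ℝ) < ((F.card - k : ℕ) : ℝ) := by
    exact_mod_cast Nat.sub_pos_of_lt hF
  have hdle : ((F.card - k : ℕ) : ℝ) ≤ (S.card : ℝ) := by exact_mod_cast hScard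
  have h1 : 2 * kmCost M / (S.card : ℝ) ≤ 2 * kmCost M / ((F.card - k : ℕ) : ℝ) :=
    div_le_div_of_nonneg_left hnum hd0 hdle
  linarith

end kmAux

/-- Upper bound for Reverse Greedy: if `R n = X ⊇ R_{n-1} ⊇ ⋯ ⊇ R_k` is an RGreedy
execution (`|R_j| = j`, and each step removes a facility minimizing the resulting cost),
then for every nonempty `k`-element set `M`, `cost(R_k) ≤ 2 H_{n−k} cost(M)`,
where `H_m = ∑_{i=1}^m 1/i`. -/
theorem rgreedy_upper_bound {X : Type*} [MetricSpace X] [Fintype X] [DecidableEq X]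
    (n k : ℕ) (hn : Fintype.card X = n) (hk : 1 ≤ k) (hkn : k < n)
    (R : ℕ → Finset X)
    (hRn : R n = Finset.univ)
    (hcard : ∀ j, k ≤ j → j ≤ n → (R j).card = j)
    (hstep : ∀ j, k < j → j ≤ n →
      ∃ r ∈ R j, R (j - 1) = (R j).erase r ∧
        ∀ r' ∈ R j, kmCost ((R j).erase r) ≤ kmCost ((R j).erase r')) :
    ∀ M : Finset X, M.Nonempty → M.card = k →
      kmCost (R k) ≤ 2 * (∑ i ∈ Finset.range (n - k), (1 : ℝ) / (i + 1)) * kmCost M := by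
  intro M hM hMk
  have hcM : 0 ≤ kmCost M := kmCost_nonneg M
  have aux : ∀ t, t ≤ n - k → kmCost (R (n - t)) ≤
      2 * kmCost M * ∑ i ∈ Finset.Ico (n - k - t) (n - k), (1:ℝ)/(i+1) := by
    intro t
    induction t with
    | zero =>
      intro _
      simp [hRn, kmCost_univ]
    | succ t ih =>
      intro ht
      have ht' : t ≤ n - k := by omega
      have hjk : k < n - t := by omega
      have hjn : n - t ≤ n := by omega
      obtain ⟨r, hrR, hR1, hmin⟩ := hstep (n - t) hjk hjn
      have hcardj : (R (n - t)).card = n - t := hcard _ (by omega) hjn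
      obtain ⟨r0, hr0, hkey⟩ := kmKey k (R (n - t)) M hM (le_of_eq hMk) (by omega)
      have h1 : kmCost (R (n - t - 1)) ≤
          kmCost (R (n - t)) + 2 * kmCost M / (((n - t) - k : ℕ) : ℝ) := by
        rw [hR1]
        calc kmCost ((R (n-t)).erase r) ≤ kmCost ((R (n-t)).erase r0) := hmin r0 hr0
          _ ≤ _ := by rw [hcardj] at hkey; exact hkey
      have hR' : R (n - (t+1)) = R (n - t - 1) := by rw [Nat.sub_sub]
      have hab : n - k - (t+1) < n - k := by omega
      have ha : n - k - (t+1) + 1 = n - k - t := by omega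
      have hsplit : ∑ i ∈ Finset.Ico (n - k - (t+1)) (n - k), (1:ℝ)/(i+1)
          = 1/(((n - k - (t+1) : ℕ) : ℝ) + 1)
            + ∑ i ∈ Finset.Ico (n - k - t) (n - k), (1:ℝ)/(i+1) := by
        rw [Finset.sum_eq_sum_Ico_succ_bot hab, ha]
      have hcast : (((n - t) - k : ℕ) : ℝ) = ((n - k - (t+1) : ℕ) : ℝ) + 1 := by
        have he : (n - t) - k = (n - k - (t+1)) + 1 := by omega
        rw [he]; push_cast; ring
      rw [hR', hsplit, mul_add]
      have hih := ih ht'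
      rw [hcast] at h1
      have hden : (0:ℝ) < ((n - k - (t+1) : ℕ) : ℝ) + 1 := by positivity
      have hterm : 2 * kmCost M / (((n - k - (t+1) : ℕ) : ℝ) + 1)
          = 2 * kmCost M * (1/(((n - k - (t+1) : ℕ) : ℝ) + 1)) := by ring
      linarith
  have hfin := aux (n - k) le_rfl
  have h1 : n - (n - k) = k := by omega
  have h2 : n - k - (n - k) = 0 := by omega
  rw [h1, h2] at hfin
  rw [Finset.range_eq_Ico]
  nlinarith [hfin]
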